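/- arXiv:2304.07128 — 2 statements merged into one kernel-verified Lean document; each statement's English description precedes it below -/
import Mathlib

section
/- Let ξ, π ∈ ℝ^N and define Z(t) = (1 + |(1−t)ξ + tπ|²)^{1/2} for t ∈ [0,1]. Then for every s > −1 and r > 0 there exist constants c₁(r,s) > 0 and c₂(r,s) > 0, depending only on r and s, such that c₁(r,s)·(1 + |ξ|² + |π|²)^{s/2} ≤ ∫₀¹ (1−t)^r Z(t)^s dt ≤ c₂(r,s)·(1 + |ξ|² + |π|²)^{s/2}. -/
open Real MeasureTheory intervalIntegral Set
open scoped NNReal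
variable {N : ℕ}

lemma swe_rpow_one_add_le {w σ : ℝ} (hw : 0 ≤ w) (h0 : 0 ≤ σ) (h1 : σ ≤ 1) :
    (1 + w) ^ σ ≤ 1 + w ^ σ := by
  have h := NNReal.rpow_add_le_add_rpow 1 w.toNNReal h0 h1
  have hc : ((1 + w.toNNReal : ℝ≥0) : ℝ) = 1 + w := by
    simp [Real.coe_toNNReal w hw]
  calc (1 + w) ^ σ = (((1 + w.toNNReal : ℝ≥0) : ℝ)) ^ σ := by rw [hc]
    _ = (((1 + w.toNNReal) ^ σ : ℝ≥0) : ℝ) := by rw [NNReal.coe_rpow]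
    _ ≤ (((1 : ℝ≥0) ^ σ + w.toNNReal ^ σ : ℝ≥0) : ℝ) := by exact_mod_cast h
    _ = 1 + w ^ σ := by
        simp [NNReal.coe_rpow, Real.coe_toNNReal w hw]

lemma swe_weight_integral {r : ℝ} (hr : 0 < r) :
    ∫ t in (0:ℝ)..1, (1 - t) ^ r = 1 / (r + 1) := by
  have h : (∫ t in (0:ℝ)..1, (1 - t) ^ r) = ∫ x in (1-(1:ℝ))..(1-0), x ^ r :=
    intervalIntegral.integral_comp_sub_left (fun x => x ^ r) 1
  rw [h]
  norm_num
  rw [integral_rpow (Or.inl (by linarith : (-1:ℝ) < r))]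
  rw [Real.one_rpow, Real.zero_rpow (by positivity)]
  ring


lemma swe_cont (s r : ℝ) (hr : 0 ≤ r) (ξ ζ : EuclideanSpace ℝ (Fin N)) :
    Continuous fun t : ℝ => (1 - t) ^ r * (1 + ‖(1 - t) • ξ + t • ζ‖ ^ 2) ^ (s / 2) := by
  have h1 : Continuous fun t : ℝ => (1 - t) ^ r :=
    (continuous_const.sub continuous_id).rpow_const (fun x => Or.inr hr)
  have hb : Continuous fun t : ℝ => 1 + ‖(1 - t) • ξ + t • ζ‖ ^ 2 := by
    apply continuous_const.add
    apply Continuous.pow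
    apply Continuous.norm
    exact ((continuous_const.sub continuous_id).smul continuous_const).add
      (continuous_id.smul continuous_const)
  have h2 : Continuous fun t : ℝ => (1 + ‖(1 - t) • ξ + t • ζ‖ ^ 2) ^ (s / 2) :=
    hb.rpow_const (fun x => Or.inl (by positivity))
  exact h1.mul h2

lemma swe_integrable (s r : ℝ) (hr : 0 ≤ r) (ξ ζ : EuclideanSpace ℝ (Fin N)) (a b : ℝ) :
    IntervalIntegrable (fun t : ℝ => (1 - t) ^ r * (1 + ‖(1 - t) • ξ + t • ζ‖ ^ 2) ^ (s / 2))
      volume a b :=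
  (swe_cont s r hr ξ ζ).intervalIntegrable a b

lemma swe_nonneg (s r : ℝ) (ξ ζ : EuclideanSpace ℝ (Fin N)) {t : ℝ} (ht : t ∈ Icc (0:ℝ) 1) :
    0 ≤ (1 - t) ^ r * (1 + ‖(1 - t) • ξ + t • ζ‖ ^ 2) ^ (s / 2) := by
  have h1 : (0:ℝ) ≤ 1 - t := by linarith [ht.2]
  positivity

lemma swe_lower_piece {f : ℝ → ℝ} (hf : ∀ a b : ℝ, IntervalIntegrable f volume a b)
    (hnn : ∀ t ∈ Icc (0:ℝ) 1, 0 ≤ f t) {a c : ℝ} (ha : 0 ≤ a) (hab : a + 1/8 ≤ 1)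
    (hc : ∀ t ∈ Icc a (a + 1/8), c ≤ f t) :
    c * (1/8) ≤ ∫ t in (0:ℝ)..1, f t := by
  have ha8 : a ≤ a + 1/8 := by linarith
  have e1 : (∫ t in (0:ℝ)..a, f t) + (∫ t in a..(a+1/8), f t) = ∫ t in (0:ℝ)..(a+1/8), f t :=
    integral_add_adjacent_intervals (hf 0 a) (hf a (a+1/8))
  have e2 : (∫ t in (0:ℝ)..(a+1/8), f t) + (∫ t in (a+1/8)..1, f t) = ∫ t in (0:ℝ)..1, f t :=
    integral_add_adjacent_intervals (hf 0 (a+1/8)) (hf (a+1/8) 1)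
  have p1 : 0 ≤ ∫ t in (0:ℝ)..a, f t :=
    intervalIntegral.integral_nonneg ha (fun u hu => hnn u ⟨hu.1, by linarith [hu.2]⟩)
  have p3 : 0 ≤ ∫ t in (a+1/8)..1, f t :=
    intervalIntegral.integral_nonneg hab (fun u hu => hnn u ⟨by linarith [hu.1], hu.2⟩)
  have p2 : c * (1/8) ≤ ∫ t in a..(a+1/8), f t := by
    have := intervalIntegral.integral_mono_on ha8
      (_root_.intervalIntegrable_const (c := c)) (hf a (a+1/8)) hc
    rwa [intervalIntegral.integral_const, smul_eq_mul, show a + 1/8 - a = 1/8 by ring,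
      mul_comm] at this
  linarith

lemma swe_abs_integrable {s : ℝ} (hs : -1 < s) (hs0 : s < 0) {t₀ : ℝ} (ht₀ : t₀ ∈ Icc (0:ℝ) 1) :
    IntervalIntegrable (fun t : ℝ => |t - t₀| ^ s) volume 0 1 ∧
      (∫ t in (0:ℝ)..1, |t - t₀| ^ s) ≤ 2 / (s + 1) := by
  have hs1 : 0 < s + 1 := by linarith
  -- right piece
  have hi2 : IntervalIntegrable (fun t : ℝ => (t - t₀) ^ s) volume t₀ 1 := by
    have := (intervalIntegrable_rpow' (a := 0) (b := 1 - t₀) hs).comp_sub_right t₀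
    simpa using this
  have heq2 : EqOn (fun t : ℝ => |t - t₀| ^ s) (fun t : ℝ => (t - t₀) ^ s) (uIcc t₀ 1) := by
    intro t ht
    rw [uIcc_of_le ht₀.2] at ht
    simp only [abs_of_nonneg (by linarith [ht.1] : (0:ℝ) ≤ t - t₀)]
  have hI2 : IntervalIntegrable (fun t : ℝ => |t - t₀| ^ s) volume t₀ 1 :=
    hi2.congr (fun t ht =>
      (heq2 (uIoc_subset_uIcc ht)).symm)
  -- left piece
  have hi1 : IntervalIntegrable (fun t : ℝ => (t₀ - t) ^ s) volume 0 t₀ := by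
    have := ((intervalIntegrable_rpow' (a := 0) (b := t₀) hs).comp_sub_left t₀).symm
    simpa using this
  have heq1 : EqOn (fun t : ℝ => |t - t₀| ^ s) (fun t : ℝ => (t₀ - t) ^ s) (uIcc 0 t₀) := by
    intro t ht
    rw [uIcc_of_le ht₀.1] at ht
    simp only [abs_sub_comm, abs_of_nonneg (by linarith [ht.2] : (0:ℝ) ≤ t₀ - t)]
  have hI1 : IntervalIntegrable (fun t : ℝ => |t - t₀| ^ s) volume 0 t₀ :=
    hi1.congr (fun t ht =>
      (heq1 (uIoc_subset_uIcc ht)).symm)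
  refine ⟨hI1.trans hI2, ?_⟩
  have hsplit : (∫ t in (0:ℝ)..t₀, |t - t₀| ^ s) + (∫ t in t₀..1, |t - t₀| ^ s)
      = ∫ t in (0:ℝ)..1, |t - t₀| ^ s :=
    integral_add_adjacent_intervals hI1 hI2
  have hy : ∀ y : ℝ, 0 ≤ y → y ≤ 1 → y ^ (s+1) / (s+1) ≤ 1 / (s+1) := by
    intro y h0 h1
    gcongr
    exact Real.rpow_le_one h0 h1 (by linarith)
  have hv2 : (∫ t in t₀..1, |t - t₀| ^ s) ≤ 1 / (s + 1) := by
    rw [intervalIntegral.integral_congr heq2,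
      intervalIntegral.integral_comp_sub_right (fun x : ℝ => x ^ s) t₀,
      show t₀ - t₀ = (0:ℝ) by ring,
      integral_rpow (Or.inl hs), Real.zero_rpow (by positivity), sub_zero]
    exact hy _ (by linarith [ht₀.2]) (by linarith [ht₀.1])
  have hv1 : (∫ t in (0:ℝ)..t₀, |t - t₀| ^ s) ≤ 1 / (s + 1) := by
    rw [intervalIntegral.integral_congr heq1,
      intervalIntegral.integral_comp_sub_left (fun x : ℝ => x ^ s) t₀,
      show t₀ - t₀ = (0:ℝ) by ring, show t₀ - 0 = t₀ by ring,
      integral_rpow (Or.inl hs), Real.zero_rpow (by positivity), sub_zero]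
    exact hy _ ht₀.1 ht₀.2
  rw [← hsplit]
  calc (∫ t in (0:ℝ)..t₀, |t - t₀| ^ s) + (∫ t in t₀..1, |t - t₀| ^ s)
      ≤ 1/(s+1) + 1/(s+1) := add_le_add hv1 hv2
    _ = 2/(s+1) := by ring



lemma swe_norm_eq (ξ : EuclideanSpace ℝ (Fin N)) {c : ℝ} (hc : 0 ≤ c) :
    ‖c • ξ‖ = c * ‖ξ‖ := by
  rw [norm_smul, Real.norm_eq_abs, abs_of_nonneg hc]

lemma swe_norm_le (ξ ζ : EuclideanSpace ℝ (Fin N)) {t : ℝ} (ht : t ∈ Icc (0:ℝ) 1) :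
    ‖(1 - t) • ξ + t • ζ‖ ≤ (1 - t) * ‖ξ‖ + t * ‖ζ‖ := by
  calc ‖(1 - t) • ξ + t • ζ‖ ≤ ‖(1 - t) • ξ‖ + ‖t • ζ‖ := norm_add_le _ _
    _ = (1 - t) * ‖ξ‖ + t * ‖ζ‖ := by
        rw [swe_norm_eq ξ (by linarith [ht.2]), swe_norm_eq ζ ht.1]

lemma swe_norm_ge1 (ξ ζ : EuclideanSpace ℝ (Fin N)) {t : ℝ} (ht : t ∈ Icc (0:ℝ) 1) :
    (1 - t) * ‖ξ‖ - t * ‖ζ‖ ≤ ‖(1 - t) • ξ + t • ζ‖ := by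
  have h := norm_add_le ((1 - t) • ξ + t • ζ) (-(t • ζ))
  simp only [add_neg_cancel_right, norm_neg] at h
  rw [swe_norm_eq ξ (by linarith [ht.2]), swe_norm_eq ζ ht.1] at h
  linarith

lemma swe_norm_ge2 (ξ ζ : EuclideanSpace ℝ (Fin N)) {t : ℝ} (ht : t ∈ Icc (0:ℝ) 1) :
    t * ‖ζ‖ - (1 - t) * ‖ξ‖ ≤ ‖(1 - t) • ξ + t • ζ‖ := by
  have h := norm_add_le ((1 - t) • ξ + t • ζ) (-((1 - t) • ξ))
  have e : (1 - t) • ξ + t • ζ + -((1 - t) • ξ) = t • ζ := by abel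
  rw [e, norm_neg] at h
  rw [swe_norm_eq ξ (by linarith [ht.2]), swe_norm_eq ζ ht.1] at h
  linarith

-- sq bound
lemma swe_sq_ge (ξ ζ : EuclideanSpace ℝ (Fin N)) {t : ℝ} (ht : t ∈ Icc (0:ℝ) 1) :
    ((1 - t) * ‖ξ‖ - t * ‖ζ‖) ^ 2 ≤ ‖(1 - t) • ξ + t • ζ‖ ^ 2 :=
  sq_le_sq' (by linarith [swe_norm_ge2 ξ ζ ht]) (swe_norm_ge1 ξ ζ ht)

lemma swe_upper2M (ξ ζ : EuclideanSpace ℝ (Fin N)) {t : ℝ} (ht : t ∈ Icc (0:ℝ) 1) :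
    1 + ‖(1 - t) • ξ + t • ζ‖ ^ 2 ≤ 2 * (1 + ‖ξ‖ ^ 2 + ‖ζ‖ ^ 2) := by
  have h := swe_norm_le ξ ζ ht
  have hA : 0 ≤ ‖ξ‖ := norm_nonneg _
  have hB : 0 ≤ ‖ζ‖ := norm_nonneg _
  have hV : 0 ≤ ‖(1 - t) • ξ + t • ζ‖ := norm_nonneg _
  have h2 : ‖(1 - t) • ξ + t • ζ‖ ≤ ‖ξ‖ + ‖ζ‖ := by
    refine h.trans ?_
    have := ht.1; have := ht.2
    nlinarith
  nlinarith [sq_nonneg (‖ξ‖ - ‖ζ‖)]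

lemma swe_main_nonneg (s r : ℝ) (hs0 : 0 ≤ s) (hr : 0 < r) (ξ ζ : EuclideanSpace ℝ (Fin N)) :
    ((1/8:ℝ) ^ r * (8:ℝ) ^ (-(s/2)) * (1/8)) * (1 + ‖ξ‖ ^ 2 + ‖ζ‖ ^ 2) ^ (s / 2) ≤
        (∫ t in (0:ℝ)..1, (1 - t) ^ r * (1 + ‖(1 - t) • ξ + t • ζ‖ ^ 2) ^ (s / 2)) ∧
      (∫ t in (0:ℝ)..1, (1 - t) ^ r * (1 + ‖(1 - t) • ξ + t • ζ‖ ^ 2) ^ (s / 2)) ≤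
        ((2:ℝ) ^ (s/2) / (r + 1)) * (1 + ‖ξ‖ ^ 2 + ‖ζ‖ ^ 2) ^ (s / 2) := by
  set M : ℝ := 1 + ‖ξ‖ ^ 2 + ‖ζ‖ ^ 2 with hMdef
  have hM : 0 < M := by positivity
  have hA : 0 ≤ ‖ξ‖ := norm_nonneg _
  have hB : 0 ≤ ‖ζ‖ := norm_nonneg _
  constructor
  · -- lower bound
    have key : ∃ a : ℝ, 0 ≤ a ∧ a + 1/8 ≤ 1 ∧
        ∀ t ∈ Icc a (a + 1/8), (1/8:ℝ) ^ r * (M/8) ^ (s/2) ≤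
          (1 - t) ^ r * (1 + ‖(1 - t) • ξ + t • ζ‖ ^ 2) ^ (s / 2) := by
      rcases le_total ‖ζ‖ ‖ξ‖ with hBA | hAB
      · refine ⟨0, le_refl _, by norm_num, ?_⟩
        intro t ht
        have ht' : t ∈ Icc (0:ℝ) 1 := ⟨ht.1, by linarith [ht.2]⟩
        have hv := swe_norm_ge1 ξ ζ ht'
        have hV : 0 ≤ ‖(1 - t) • ξ + t • ζ‖ := norm_nonneg _
        have h34 : (3/4) * ‖ξ‖ ≤ ‖(1 - t) • ξ + t • ζ‖ := by
          have h1 := ht.1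
          have h2 : t ≤ 1/8 := by linarith [ht.2]
          nlinarith
        have hM8 : M / 8 ≤ 1 + ‖(1 - t) • ξ + t • ζ‖ ^ 2 := by
          nlinarith [mul_self_le_mul_self (by positivity : (0:ℝ) ≤ 3/4 * ‖ξ‖) h34,
            mul_self_le_mul_self hB hBA]
        have hw : (1/8:ℝ) ^ r ≤ (1 - t) ^ r :=
          Real.rpow_le_rpow (by norm_num) (by linarith [ht.2]) hr.le
        exact mul_le_mul hw
          (Real.rpow_le_rpow (by positivity) hM8 (by linarith)) (by positivity)
          (Real.rpow_nonneg (by linarith [ht'.2]) r)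
      · refine ⟨3/4, by norm_num, by norm_num, ?_⟩
        intro t ht
        have ht' : t ∈ Icc (0:ℝ) 1 := ⟨by linarith [ht.1], by linarith [ht.2]⟩
        have hv := swe_norm_ge2 ξ ζ ht'
        have hV : 0 ≤ ‖(1 - t) • ξ + t • ζ‖ := norm_nonneg _
        have h12 : (1/2) * ‖ζ‖ ≤ ‖(1 - t) • ξ + t • ζ‖ := by
          have h1 := ht.1
          have h2 : t ≤ 7/8 := by linarith [ht.2]
          nlinarith
        have hM8 : M / 8 ≤ 1 + ‖(1 - t) • ξ + t • ζ‖ ^ 2 := by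
          nlinarith [mul_self_le_mul_self (by positivity : (0:ℝ) ≤ 1/2 * ‖ζ‖) h12,
            mul_self_le_mul_self hA hAB]
        have hw : (1/8:ℝ) ^ r ≤ (1 - t) ^ r :=
          Real.rpow_le_rpow (by norm_num) (by linarith [ht.2]) hr.le
        exact mul_le_mul hw
          (Real.rpow_le_rpow (by positivity) hM8 (by linarith)) (by positivity)
          (Real.rpow_nonneg (by linarith [ht'.2]) r)
    obtain ⟨a, ha, hab, hkey⟩ := key
    have hlp := swe_lower_piece (f := fun t : ℝ =>
        (1 - t) ^ r * (1 + ‖(1 - t) • ξ + t • ζ‖ ^ 2) ^ (s / 2))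
      (fun a b => swe_integrable s r hr.le ξ ζ a b) (fun t ht => swe_nonneg s r ξ ζ ht)
      ha hab hkey
    refine le_trans (le_of_eq ?_) hlp
    rw [Real.div_rpow hM.le (by norm_num : (0:ℝ) ≤ 8),
      Real.rpow_neg (by norm_num : (0:ℝ) ≤ 8)]
    field_simp
    try ring
  · -- upper bound
    have key : ∀ t ∈ Icc (0:ℝ) 1,
        (1 - t) ^ r * (1 + ‖(1 - t) • ξ + t • ζ‖ ^ 2) ^ (s / 2) ≤
          (1 - t) ^ r * (2 * M) ^ (s/2) := by
      intro t ht
      exact mul_le_mul_of_nonneg_left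
        (Real.rpow_le_rpow (by positivity) (swe_upper2M ξ ζ ht) (by linarith))
        (Real.rpow_nonneg (by linarith [ht.2]) r)
    have hgint : IntervalIntegrable (fun t : ℝ => (1 - t) ^ r * (2 * M) ^ (s/2)) volume 0 1 :=
      (((continuous_const.sub continuous_id).rpow_const fun x => Or.inr hr.le).mul
        continuous_const).intervalIntegrable 0 1
    have h := intervalIntegral.integral_mono_on (by norm_num : (0:ℝ) ≤ 1)
      (swe_integrable s r hr.le ξ ζ 0 1) hgint key
    rw [intervalIntegral.integral_mul_const, swe_weight_integral hr] at h
    refine h.trans (le_of_eq ?_)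
    rw [Real.mul_rpow (by norm_num : (0:ℝ) ≤ 2) hM.le]
    ring

lemma swe_main_neg (s r : ℝ) (hs : -1 < s) (hs0 : s < 0) (hr : 0 < r)
    (ξ ζ : EuclideanSpace ℝ (Fin N)) :
    ((2:ℝ) ^ (s/2) / (r + 1)) * (1 + ‖ξ‖ ^ 2 + ‖ζ‖ ^ 2) ^ (s / 2) ≤
        (∫ t in (0:ℝ)..1, (1 - t) ^ r * (1 + ‖(1 - t) • ξ + t • ζ‖ ^ 2) ^ (s / 2)) ∧
      (∫ t in (0:ℝ)..1, (1 - t) ^ r * (1 + ‖(1 - t) • ξ + t • ζ‖ ^ 2) ^ (s / 2)) ≤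
        (1 + 2 / (s + 1)) * (1 + ‖ξ‖ ^ 2 + ‖ζ‖ ^ 2) ^ (s / 2) := by
  set M : ℝ := 1 + ‖ξ‖ ^ 2 + ‖ζ‖ ^ 2 with hMdef
  have hM : 0 < M := by positivity
  have hA : 0 ≤ ‖ξ‖ := norm_nonneg _
  have hB : 0 ≤ ‖ζ‖ := norm_nonneg _
  have hs1 : 0 < s + 1 := by linarith
  constructor
  · -- lower bound
    have key : ∀ t ∈ Icc (0:ℝ) 1,
        (1 - t) ^ r * (2 * M) ^ (s/2) ≤
          (1 - t) ^ r * (1 + ‖(1 - t) • ξ + t • ζ‖ ^ 2) ^ (s / 2) := by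
      intro t ht
      exact mul_le_mul_of_nonneg_left
        (Real.rpow_le_rpow_of_nonpos (by positivity) (swe_upper2M ξ ζ ht) (by linarith))
        (Real.rpow_nonneg (by linarith [ht.2]) r)
    have hgint : IntervalIntegrable (fun t : ℝ => (1 - t) ^ r * (2 * M) ^ (s/2)) volume 0 1 :=
      (((continuous_const.sub continuous_id).rpow_const fun x => Or.inr hr.le).mul
        continuous_const).intervalIntegrable 0 1
    have h := intervalIntegral.integral_mono_on (by norm_num : (0:ℝ) ≤ 1)
      hgint (swe_integrable s r hr.le ξ ζ 0 1) key
    rw [intervalIntegral.integral_mul_const, swe_weight_integral hr] at h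
    refine le_trans (le_of_eq ?_) h
    rw [Real.mul_rpow (by norm_num : (0:ℝ) ≤ 2) hM.le]
    ring
  · -- upper bound
    by_cases hS : ‖ξ‖ + ‖ζ‖ = 0
    · have hx : ξ = 0 := norm_eq_zero.mp (by linarith)
      have hz : ζ = 0 := norm_eq_zero.mp (by linarith)
      subst hx hz
      have hint : ∀ t : ℝ, (1 - t) ^ r *
          (1 + ‖(1 - t) • (0 : EuclideanSpace ℝ (Fin N)) + t • (0 : EuclideanSpace ℝ (Fin N))‖ ^ 2) ^ (s / 2)
          = (1 - t) ^ r := by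
        intro t; simp
      rw [intervalIntegral.integral_congr (fun t _ => hint t), swe_weight_integral hr]
      have : M = 1 := by simp [hMdef]
      rw [this, Real.one_rpow, mul_one]
      have h1 : 1/(r+1) ≤ 1 := by
        rw [div_le_one (by linarith)]; linarith
      have h2 : 0 < 2/(s+1) := by positivity
      linarith
    · have hSpos : 0 < ‖ξ‖ + ‖ζ‖ := lt_of_le_of_ne (by positivity) (Ne.symm hS)
      set t₀ : ℝ := ‖ξ‖ / (‖ξ‖ + ‖ζ‖) with ht₀def
      have ht₀ : t₀ ∈ Icc (0:ℝ) 1 :=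
        ⟨by positivity, (div_le_one hSpos).mpr (by linarith)⟩
      obtain ⟨habsint, habsval⟩ := swe_abs_integrable hs hs0 ht₀
      have hgint : IntervalIntegrable
          (fun t : ℝ => M ^ (s/2) * (1 + |t - t₀| ^ s)) volume 0 1 :=
        ((_root_.intervalIntegrable_const (c := (1:ℝ))).add habsint).const_mul _
      have hae : (fun t : ℝ => (1 - t) ^ r * (1 + ‖(1 - t) • ξ + t • ζ‖ ^ 2) ^ (s / 2))
          ≤ᵐ[volume.restrict (Icc (0:ℝ) 1)] fun t : ℝ => M ^ (s/2) * (1 + |t - t₀| ^ s) := by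
        have h0 : ∀ᵐ t : ℝ ∂volume, t ≠ t₀ := by
          rw [ae_iff]
          have : {a : ℝ | ¬a ≠ t₀} = {t₀} := by ext a; simp
          rw [this]
          exact Real.volume_singleton
        filter_upwards [ae_restrict_of_ae h0, ae_restrict_mem measurableSet_Icc] with t htne ht
        set V : ℝ := ‖(1 - t) • ξ + t • ζ‖ with hVdef
        have hV : 0 ≤ V := norm_nonneg _
        set u : ℝ := |t - t₀| with hudef
        have hu : 0 < u := abs_pos.mpr (sub_ne_zero.mpr htne)
        have step0 : (1 - t) ^ r * (1 + V ^ 2) ^ (s / 2) ≤ (1 + V ^ 2) ^ (s / 2) :=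
          mul_le_of_le_one_left (Real.rpow_nonneg (by positivity) _)
            (Real.rpow_le_one (by linarith [ht.2]) (by linarith [ht.1]) hr.le)
        -- S * u = |(1-t)‖ξ‖ - t‖ζ‖|
        have hstS : (‖ξ‖ + ‖ζ‖) * u = |(1 - t) * ‖ξ‖ - t * ‖ζ‖| := by
          have he : (‖ξ‖ + ‖ζ‖) * (t - t₀) = -((1 - t) * ‖ξ‖ - t * ‖ζ‖) := by
            have h' : (‖ξ‖ + ‖ζ‖) * t₀ = ‖ξ‖ := by rw [ht₀def]; field_simp
            linear_combination -h'
          calc (‖ξ‖ + ‖ζ‖) * u = |(‖ξ‖ + ‖ζ‖) * (t - t₀)| := by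
                rw [abs_mul, abs_of_nonneg hSpos.le]
            _ = |(1 - t) * ‖ξ‖ - t * ‖ζ‖| := by rw [he, abs_neg]
        have hq : (‖ξ‖ + ‖ζ‖) ^ 2 * u ^ 2 ≤ V ^ 2 := by
          have h1 := swe_sq_ge ξ ζ ht
          have h2 : ((‖ξ‖ + ‖ζ‖) * u) ^ 2 = ((1 - t) * ‖ξ‖ - t * ‖ζ‖) ^ 2 := by
            rw [hstS, sq_abs]
          nlinarith [h1, h2]
        have hM2 : M ≤ 1 + (‖ξ‖ + ‖ζ‖) ^ 2 := by nlinarith [mul_nonneg hA hB]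
        have key : M * u ^ 2 ≤ (u ^ 2 + 1) * (1 + V ^ 2) := by
          nlinarith [mul_le_mul_of_nonneg_right hM2 (sq_nonneg u), hq,
            sq_nonneg u, sq_nonneg (u * V)]
        have key2 : M ≤ (u ^ 2 + 1) / u ^ 2 * (1 + V ^ 2) := by
          rw [div_mul_eq_mul_div, le_div_iff₀ (by positivity)]
          linarith [key]
        set σ : ℝ := -(s/2) with hσdef
        have hσ0 : 0 < σ := by simp [hσdef]; linarith
        have hσ1 : σ ≤ 1 := by simp [hσdef]; linarith
        have kr : M ^ σ ≤ ((u ^ 2 + 1) / u ^ 2) ^ σ * (1 + V ^ 2) ^ σ := by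
          rw [← Real.mul_rpow (by positivity) (by positivity)]
          exact Real.rpow_le_rpow hM.le key2 hσ0.le
        have hus : ((1 : ℝ) / u ^ 2) ^ σ = u ^ s := by
          rw [one_div, ← Real.rpow_natCast u 2, ← Real.rpow_neg hu.le,
            ← Real.rpow_mul hu.le]
          congr 1
          push_cast
          rw [hσdef]; ring
        have hsubadd : ((u ^ 2 + 1) / u ^ 2) ^ σ ≤ 1 + u ^ s := by
          have he : (u ^ 2 + 1) / u ^ 2 = 1 + 1 / u ^ 2 := by field_simp
          rw [he, ← hus]
          exact swe_rpow_one_add_le (by positivity) hσ0.le hσ1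
        have main2 : M ^ σ ≤ (1 + u ^ s) * (1 + V ^ 2) ^ σ :=
          kr.trans (mul_le_mul_of_nonneg_right hsubadd (Real.rpow_nonneg (by positivity) σ))
        have h1 : 0 < (1 + V ^ 2) ^ σ := Real.rpow_pos_of_pos (by positivity) σ
        have h2 : 0 < M ^ σ := Real.rpow_pos_of_pos hM σ
        have final : (1 + V ^ 2) ^ (s / 2) ≤ M ^ (s / 2) * (1 + u ^ s) := by
          have hs2 : s / 2 = -σ := by rw [hσdef]; ring
          rw [hs2, Real.rpow_neg (by positivity : (0:ℝ) ≤ 1 + V ^ 2), Real.rpow_neg hM.le]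
          have h3 : ((1 + V ^ 2) ^ σ)⁻¹ * M ^ σ ≤ 1 + u ^ s := by
            rw [mul_comm, ← div_eq_mul_inv, div_le_iff₀ h1]
            exact main2
          calc ((1 + V ^ 2) ^ σ)⁻¹ = (M ^ σ)⁻¹ * (((1 + V ^ 2) ^ σ)⁻¹ * M ^ σ) := by
                field_simp
            _ ≤ (M ^ σ)⁻¹ * (1 + u ^ s) :=
                mul_le_mul_of_nonneg_left h3 (inv_nonneg.2 h2.le)
        exact step0.trans final
      have hmono := intervalIntegral.integral_mono_ae_restrict (by norm_num : (0:ℝ) ≤ 1)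
        (swe_integrable s r hr.le ξ ζ 0 1) hgint hae
      rw [intervalIntegral.integral_const_mul] at hmono
      have hsum : (∫ t in (0:ℝ)..1, (1 + |t - t₀| ^ s))
          = 1 + ∫ t in (0:ℝ)..1, |t - t₀| ^ s := by
        rw [intervalIntegral.integral_add (_root_.intervalIntegrable_const (c := (1:ℝ))) habsint,
          intervalIntegral.integral_const]
        norm_num
      rw [hsum] at hmono
      refine hmono.trans ?_
      rw [mul_comm ((1:ℝ) + 2 / (s+1)) (M ^ (s/2))]
      exact mul_le_mul_of_nonneg_left (by linarith [habsval]) (Real.rpow_nonneg hM.le _)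

theorem segment_weight_estimate (N : ℕ) (s r : ℝ) (hs : -1 < s) (hr : 0 < r) :
    ∃ c₁ c₂ : ℝ, 0 < c₁ ∧ 0 < c₂ ∧
      ∀ ξ ζ : EuclideanSpace ℝ (Fin N),
        c₁ * (1 + ‖ξ‖ ^ 2 + ‖ζ‖ ^ 2) ^ (s / 2) ≤
            (∫ t in (0:ℝ)..1, (1 - t) ^ r * (1 + ‖(1 - t) • ξ + t • ζ‖ ^ 2) ^ (s / 2)) ∧
        (∫ t in (0:ℝ)..1, (1 - t) ^ r * (1 + ‖(1 - t) • ξ + t • ζ‖ ^ 2) ^ (s / 2)) ≤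
            c₂ * (1 + ‖ξ‖ ^ 2 + ‖ζ‖ ^ 2) ^ (s / 2) := by
  rcases le_or_gt 0 s with hs0 | hs0
  · exact ⟨(1/8:ℝ) ^ r * (8:ℝ) ^ (-(s/2)) * (1/8), (2:ℝ) ^ (s/2) / (r + 1),
      by positivity, by positivity, fun ξ ζ => swe_main_nonneg s r hs0 hr ξ ζ⟩
  · refine ⟨(2:ℝ) ^ (s/2) / (r + 1), 1 + 2 / (s + 1), by positivity, ?_,
      fun ξ ζ => swe_main_neg s r hs hs0 hr ξ ζ⟩
    have h : 0 < 2 / (s + 1) := div_pos two_pos (by linarith)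
    linarith
end

section
/- Let 1 < p < 2 and let ξ, η ∈ ℝ^N not both zero. Then (p−1)·∫₀¹ |ξ + t·η|^{p−2} dt ≥ ν·(|ξ|² + |ξ + η|²)^{(p−2)/2} for some constant ν > 0 depending only on p (and N). -/
open Real MeasureTheory

section Aux

variable {E : Type*} [NormedAddCommGroup E] [InnerProductSpace ℝ E]

lemma key_norm_lb (ξ η : E) (hη : η ≠ 0) (t : ℝ) :
    ‖η‖ * |t - (-(inner ℝ ξ η : ℝ) / ‖η‖ ^ 2)| ≤ ‖ξ + t • η‖ := by
  set a := ‖η‖ with ha_def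
  have ha : 0 < a := norm_pos_iff.mpr hη
  set i := (inner ℝ ξ η : ℝ) with hi_def
  set t₀ : ℝ := -i / a ^ 2 with ht₀_def
  have hCS : i ^ 2 ≤ ‖ξ‖ ^ 2 * a ^ 2 := by
    have := real_inner_mul_inner_self_le ξ η
    rw [real_inner_self_eq_norm_sq, real_inner_self_eq_norm_sq] at this
    nlinarith [this]
  have hsq : ‖ξ + t • η‖ ^ 2 = ‖ξ‖ ^ 2 + 2 * (t * i) + t ^ 2 * a ^ 2 := by
    rw [@norm_add_sq_real, real_inner_smul_right, norm_smul, Real.norm_eq_abs]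
    rw [mul_pow, sq_abs]
  have h1 : (a * |t - t₀|) ^ 2 ≤ ‖ξ + t • η‖ ^ 2 := by
    rw [mul_pow, sq_abs, hsq]
    have hexp : a ^ 2 * (t - t₀) ^ 2 = t ^ 2 * a ^ 2 + 2 * (t * i) + i ^ 2 / a ^ 2 := by
      rw [ht₀_def]
      field_simp
      ring
    rw [hexp]
    have : i ^ 2 / a ^ 2 ≤ ‖ξ‖ ^ 2 := by
      rw [div_le_iff₀ (by positivity)]
      exact hCS
    linarith
  have h2 : 0 ≤ a * |t - t₀| := by positivity
  nlinarith [norm_nonneg (ξ + t • η), h1, h2]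

lemma measurable_f (ξ η : E) (r : ℝ) :
    Measurable fun t : ℝ => ‖ξ + t • η‖ ^ r := by
  have hc : Continuous fun t : ℝ => ‖ξ + t • η‖ :=
    (continuous_const.add (continuous_id.smul continuous_const)).norm
  exact hc.measurable.pow measurable_const

lemma integrable_aux (ξ η : E) {r : ℝ} (hr1 : -1 < r) (hr0 : r < 0) :
    IntervalIntegrable (fun t => ‖ξ + t • η‖ ^ r) volume 0 1 := by
  by_cases hη : η = 0
  · subst hη
    simp only [smul_zero, add_zero]
    exact intervalIntegrable_const
  · set a := ‖η‖ with ha_def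
    have ha : 0 < a := norm_pos_iff.mpr hη
    set t₀ : ℝ := -(inner ℝ ξ η : ℝ) / a ^ 2 with ht₀_def
    set c : ℝ := max 0 (min t₀ 1) with hc_def
    have h0c : 0 ≤ c := le_max_left _ _
    have hc1 : c ≤ 1 := max_le zero_le_one (min_le_right _ _)
    have hmeas := measurable_f ξ η r
    have hne : ∀ᵐ t : ℝ, t ≠ t₀ := by
      refine ae_iff.mpr ?_
      simp only [not_not, Set.setOf_eq_eq_singleton]
      exact measure_singleton t₀
    -- piece on [0, c]
    have h1 : IntervalIntegrable (fun t => ‖ξ + t • η‖ ^ r) volume 0 c := by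
      rw [intervalIntegrable_iff_integrableOn_Ioc_of_le h0c]
      have hg : IntegrableOn (fun t : ℝ => a ^ r * (t₀ - t) ^ r) (Set.Ioc 0 c) := by
        have := ((intervalIntegral.intervalIntegrable_rpow' (a := t₀) (b := t₀ - c) hr1).comp_sub_left t₀)
        simp only [sub_self, sub_sub_cancel] at this
        rw [intervalIntegrable_iff_integrableOn_Ioc_of_le h0c] at this
        exact this.const_mul _
      refine hg.integrable.mono (hmeas.aestronglyMeasurable) ?_
      filter_upwards [ae_restrict_mem measurableSet_Ioc, ae_restrict_of_ae hne]
        with t ht hnt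
      have htlt : t < t₀ := by
        have hcle : c ≤ max 0 t₀ := max_le_max le_rfl (min_le_left _ _)
        rcases le_or_gt 0 t₀ with h | h
        · have : t ≤ t₀ := le_trans ht.2 (by rwa [max_eq_right h] at hcle)
          exact lt_of_le_of_ne this hnt
        · exfalso
          have : c ≤ 0 := by rwa [max_eq_left h.le] at hcle
          linarith [ht.1, ht.2]
      have hpos : 0 < t₀ - t := by linarith
      have hkey : a * (t₀ - t) ≤ ‖ξ + t • η‖ := by
        have := key_norm_lb ξ η hη t
        rwa [← ht₀_def, abs_sub_comm, abs_of_pos hpos] at this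
      rw [Real.norm_eq_abs, Real.norm_eq_abs, abs_of_nonneg (Real.rpow_nonneg (norm_nonneg _) r),
        abs_of_nonneg (by positivity)]
      calc ‖ξ + t • η‖ ^ r ≤ (a * (t₀ - t)) ^ r :=
            Real.rpow_le_rpow_of_nonpos (by positivity) hkey hr0.le
        _ = a ^ r * (t₀ - t) ^ r := Real.mul_rpow ha.le hpos.le
    -- piece on [c, 1]
    have h2 : IntervalIntegrable (fun t => ‖ξ + t • η‖ ^ r) volume c 1 := by
      rw [intervalIntegrable_iff_integrableOn_Ioc_of_le hc1]
      have hg : IntegrableOn (fun t : ℝ => a ^ r * (t - t₀) ^ r) (Set.Ioc c 1) := by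
        have := ((intervalIntegral.intervalIntegrable_rpow' (a := c - t₀) (b := 1 - t₀) hr1).comp_sub_right t₀)
        simp only [sub_add_cancel] at this
        rw [intervalIntegrable_iff_integrableOn_Ioc_of_le hc1] at this
        exact this.const_mul _
      refine hg.integrable.mono (hmeas.aestronglyMeasurable) ?_
      filter_upwards [ae_restrict_mem measurableSet_Ioc, ae_restrict_of_ae hne]
        with t ht hnt
      have htgt : t₀ < t := by
        have hcge : min t₀ 1 ≤ c := le_max_right _ _
        rcases le_or_gt t₀ 1 with h | h
        · have : t₀ ≤ c := by rwa [min_eq_left h] at hcge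
          exact lt_of_le_of_lt this ht.1
        · exfalso
          have h1c : (1:ℝ) ≤ c := by
            rw [hc_def, min_eq_right h.le]
            exact le_max_right 0 1
          linarith [ht.1, ht.2]
      have hpos : 0 < t - t₀ := by linarith
      have hkey : a * (t - t₀) ≤ ‖ξ + t • η‖ := by
        have := key_norm_lb ξ η hη t
        rwa [← ht₀_def, abs_of_pos hpos] at this
      rw [Real.norm_eq_abs, Real.norm_eq_abs, abs_of_nonneg (Real.rpow_nonneg (norm_nonneg _) r),
        abs_of_nonneg (by positivity)]
      calc ‖ξ + t • η‖ ^ r ≤ (a * (t - t₀)) ^ r :=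
            Real.rpow_le_rpow_of_nonpos (by positivity) hkey hr0.le
        _ = a ^ r * (t - t₀) ^ r := Real.mul_rpow ha.le hpos.le
    exact h1.trans h2

end Aux

theorem averaged_degenerate_weight_lower_bound (p : ℝ) (hp1 : 1 < p) (hp2 : p < 2) (N : ℕ) :
    ∃ ν : ℝ, 0 < ν ∧
      ∀ ξ η : EuclideanSpace ℝ (Fin N), ¬(ξ = 0 ∧ η = 0) →
        ν * (‖ξ‖ ^ 2 + ‖ξ + η‖ ^ 2) ^ ((p - 2) / 2) ≤
          (p - 1) * ∫ t in (0:ℝ)..1, ‖ξ + t • η‖ ^ (p - 2) := by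
  set r : ℝ := p - 2 with hr_def
  have hr1 : -1 < r := by simp [hr_def]; linarith
  have hr0 : r < 0 := by simp [hr_def]; linarith
  refine ⟨(p - 1) * 2 ^ r, mul_pos (by linarith) (Real.rpow_pos_of_pos two_pos r), ?_⟩
  intro ξ η h
  set S : ℝ := ‖ξ‖ ^ 2 + ‖ξ + η‖ ^ 2 with hS_def
  have hS : 0 < S := by
    by_cases hξ : ξ = 0
    · have hη : η ≠ 0 := fun hh => h ⟨hξ, hh⟩
      have : ξ + η ≠ 0 := by simp [hξ, hη]
      have := norm_pos_iff.mpr this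
      nlinarith [norm_nonneg ξ]
    · have := norm_pos_iff.mpr hξ
      nlinarith [norm_nonneg (ξ + η)]
  set W : ℝ := Real.sqrt S with hW_def
  have hW : 0 < W := Real.sqrt_pos.mpr hS
  have hξW : ‖ξ‖ ≤ W := by
    rw [hW_def, ← Real.sqrt_sq (norm_nonneg ξ)]
    exact Real.sqrt_le_sqrt (by nlinarith [sq_nonneg ‖ξ + η‖])
  have hξηW : ‖ξ + η‖ ≤ W := by
    rw [hW_def, ← Real.sqrt_sq (norm_nonneg (ξ + η))]
    exact Real.sqrt_le_sqrt (by nlinarith [sq_nonneg ‖ξ‖])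
  -- pointwise upper bound on the norm
  have hub : ∀ t ∈ Set.Icc (0:ℝ) 1, ‖ξ + t • η‖ ≤ 2 * W := by
    intro t ht
    have hdecomp : ξ + t • η = (1 - t) • ξ + t • (ξ + η) := by
      rw [smul_add, sub_smul, one_smul]
      abel
    calc ‖ξ + t • η‖ = ‖(1 - t) • ξ + t • (ξ + η)‖ := by rw [hdecomp]
      _ ≤ ‖(1 - t) • ξ‖ + ‖t • (ξ + η)‖ := norm_add_le _ _
      _ = (1 - t) * ‖ξ‖ + t * ‖ξ + η‖ := by
          rw [norm_smul, norm_smul, Real.norm_eq_abs, Real.norm_eq_abs,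
            abs_of_nonneg (by linarith [ht.2] : (0:ℝ) ≤ 1 - t), abs_of_nonneg ht.1]
      _ ≤ 2 * W := by nlinarith [ht.1, ht.2, hξW, hξηW, hW]
  -- a.e. nonvanishing
  have hzero : ∀ᵐ t : ℝ, ξ + t • η ≠ 0 := by
    have hsub : Set.Subsingleton {t : ℝ | ξ + t • η = 0} := by
      intro t1 h1 t2 h2
      by_contra hne
      have hη : η = 0 := by
        have : (t1 - t2) • η = 0 := by
          have := sub_eq_zero.mpr (h1.trans h2.symm)
          simpa [sub_smul] using by
            have : (ξ + t1 • η) - (ξ + t2 • η) = 0 := by rw [h1, h2]; simp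
            simpa [add_sub_add_left_eq_sub, ← sub_smul] using this
        rcases smul_eq_zero.mp this with h | h
        · exact absurd (sub_eq_zero.mp h) hne
        · exact h
      have hξ : ξ = 0 := by simpa [hη] using h1
      exact h ⟨hξ, hη⟩
    refine ae_iff.mpr ?_
    simp only [not_not]
    exact Set.Countable.measure_zero hsub.countable _
  have hf_int : IntervalIntegrable (fun t => ‖ξ + t • η‖ ^ r) volume 0 1 :=
    integrable_aux ξ η hr1 hr0
  have hlb : (2 * W) ^ r ≤ ∫ t in (0:ℝ)..1, ‖ξ + t • η‖ ^ r := by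
    have := intervalIntegral.integral_mono_ae_restrict (f := fun _ : ℝ => (2 * W) ^ r)
      (g := fun t => ‖ξ + t • η‖ ^ r) (μ := volume) zero_le_one
      intervalIntegrable_const hf_int ?_
    · simpa using this
    · filter_upwards [ae_restrict_mem measurableSet_Icc, ae_restrict_of_ae hzero]
        with t ht hnz
      exact Real.rpow_le_rpow_of_nonpos (norm_pos_iff.mpr hnz) (hub t ht) hr0.le
  have hWr : (2 * W) ^ r = 2 ^ r * S ^ (r / 2) := by
    rw [Real.mul_rpow (by norm_num) hW.le, hW_def, Real.sqrt_eq_rpow,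
      ← Real.rpow_mul hS.le, show (1 / 2) * r = r / 2 by ring]
  calc (p - 1) * 2 ^ r * S ^ ((p - 2) / 2) = (p - 1) * (2 ^ r * S ^ (r / 2)) := by
        rw [hr_def]; ring
    _ = (p - 1) * (2 * W) ^ r := by rw [hWr]
    _ ≤ (p - 1) * ∫ t in (0:ℝ)..1, ‖ξ + t • η‖ ^ r :=
        mul_le_mul_of_nonneg_left hlb (by linarith)
end
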